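/- Let M be a nonsingular n×n integer matrix such that m = |det M| is squarefree (not divisible by the square of any prime), and let A ⊆ ℤⁿ/Mℤⁿ be a finite set. Then the multidimensional circulant digraph G(M;A) is a circulant: there exist B ⊆ ℤ/mℤ and a bijection e : ℤⁿ/Mℤⁿ → ℤ/mℤ such that for all u, v, v − u ∈ A if and only if e(v) − e(u) ∈ B. -/

import Mathlib

/-!
The group `ℤⁿ/Mℤⁿ` has order `|det M|` (Smith normal form), and a finite abelian group of
squarefree order is cyclic (all its Sylow subgroups have prime order). So `ℤⁿ/Mℤⁿ ≅ ℤ/mℤ` as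
groups, and any group isomorphism carries the connection set `A` to a connection set `B` of an
isomorphic circulant.
-/

theorem Matrix.natCard_quotient_range_mulVecLin {ι : Type*} [Fintype ι] [DecidableEq ι]
    (M : Matrix ι ι ℤ) (hM : M.det ≠ 0) :
    Nat.card ((ι → ℤ) ⧸ LinearMap.range M.mulVecLin) = M.det.natAbs := by
  have hinj : Function.Injective M.mulVecLin := by
    rw [← LinearMap.ker_eq_bot, Matrix.ker_mulVecLin_eq_bot_iff]
    intro v hv
    by_contra hv0
    exact hM (Matrix.exists_mulVec_eq_zero_iff.mp ⟨v, hv0, hv⟩)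
  rw [← (LinearMap.range M.mulVecLin).natAbs_det_equiv (LinearEquiv.ofInjective _ hinj),
    ← LinearMap.det_toLin', Matrix.toLin'_apply']
  rfl

theorem isAddCyclic_of_squarefree_natCard {G : Type*} [AddCommGroup G]
    (hG : Squarefree (Nat.card G)) : IsAddCyclic G := by
  have : Finite G := Nat.finite_of_card_ne_zero hG.ne_zero
  have : IsZGroup (Multiplicative G) := IsZGroup.of_squarefree hG
  rw [← isCyclic_multiplicative_iff]
  exact IsCyclic.of_exponent_eq_card (IsZGroup.exponent_eq_card _)

theorem AddEquiv.sub_mem_iff_sub_mem_image {G H : Type*} [AddGroup G] [AddGroup H]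
    (e : G ≃+ H) (A : Set G) (u v : G) : v - u ∈ A ↔ e v - e u ∈ e '' A := by
  rw [← map_sub, e.injective.mem_set_image]

theorem stmt_10_general (n : ℕ) (M : Matrix (Fin n) (Fin n) ℤ)
    (hsf : Squarefree M.det.natAbs)
    (A : Set ((Fin n → ℤ) ⧸ LinearMap.range M.mulVecLin)) :
    ∃ (B : Set (ZMod M.det.natAbs))
      (e : ((Fin n → ℤ) ⧸ LinearMap.range M.mulVecLin) ≃ ZMod M.det.natAbs),
      ∀ u v : (Fin n → ℤ) ⧸ LinearMap.range M.mulVecLin,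
        v - u ∈ A ↔ e v - e u ∈ B := by
  have hcard := M.natCard_quotient_range_mulVecLin (by simpa using hsf.ne_zero)
  let e := (zmodAddCyclicAddEquiv (isAddCyclic_of_squarefree_natCard (hcard ▸ hsf))).symm.trans
    (ZMod.ringEquivCongr hcard).toAddEquiv
  exact ⟨e '' A, e.toEquiv, e.sub_mem_iff_sub_mem_image A⟩

/-- Let `M` be a nonsingular `n × n` integer matrix such that
`m = |det M|` is squarefree, and let `A ⊆ ℤⁿ/Mℤⁿ` be a finite set.  Then the
multidimensional circulant digraph `G(M;A)` is a circulant: there exist `B ⊆ ℤ/mℤ`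
and a bijection `e : ℤⁿ/Mℤⁿ → ℤ/mℤ` such that for all `u, v`, `v - u ∈ A` if and only
if `e v - e u ∈ B`. -/
theorem stmt_10 (n : ℕ) (M : Matrix (Fin n) (Fin n) ℤ) (hM : M.det ≠ 0)
    (hsf : Squarefree M.det.natAbs)
    (A : Set ((Fin n → ℤ) ⧸ LinearMap.range M.mulVecLin)) (hA : A.Finite) :
    ∃ (B : Set (ZMod M.det.natAbs))
      (e : ((Fin n → ℤ) ⧸ LinearMap.range M.mulVecLin) ≃ ZMod M.det.natAbs),
      ∀ u v : (Fin n → ℤ) ⧸ LinearMap.range M.mulVecLin,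
        v - u ∈ A ↔ e v - e u ∈ B :=
  stmt_10_general n M hsf A
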